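/- For the two-mode squeezed vacuum coefficients c_n = √(N^n/(N+1)^{n+1}) with N > 0, and the thermal ratio g = n_e/(1+n_e) with n_e > 0, the ratio c_n²/(g c_{n+1}²) = (1+n_e)(1+N)/(n_e N) is constant in n, and hence G = ∑_n (n+1) M(c_n², g c_{n+1}²) = M(1, g N/(N+1)) · ∑_n (n+1) c_n² = (N+1) M(1, g N/(N+1)); concretely G = 4 n_e N (1+n_e)/(1+n_e+√(n_e N (1+n_e)/(1+N)))². -/

import Mathlib

/-- The mean function M(x,y) = 4xy/(√x+√y)². -/
noncomputable def meanM (x y : ℝ) : ℝ := 4 * x * y / (Real.sqrt x + Real.sqrt y) ^ 2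

lemma meanM_homog (t x y : ℝ) (ht : 0 ≤ t) :
    meanM (t * x) (t * y) = t * meanM x y := by
  unfold meanM
  rw [Real.sqrt_mul ht, Real.sqrt_mul ht, ← mul_add, mul_pow, Real.sq_sqrt ht]
  rcases eq_or_lt_of_le ht with h | h
  · simp [← h]
  · rw [show (4 * (t * x) * (t * y)) = (t * (4 * x * y)) * t by ring,
      show t * (Real.sqrt x + Real.sqrt y) ^ 2 = (Real.sqrt x + Real.sqrt y) ^ 2 * t by ring,
      mul_div_mul_right _ _ h.ne', mul_div_assoc]

lemma sum_np1_geom (x : ℝ) (h0 : 0 ≤ x) (h1 : x < 1) :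
    (∑' n : ℕ, ((n : ℝ) + 1) * x ^ n) = (1 - x) ⁻¹ ^ 2 := by
  have hx : ‖x‖ < 1 := by rwa [Real.norm_eq_abs, abs_of_nonneg h0]
  have hs1 : Summable (fun n : ℕ => (n : ℝ) * x ^ n) := by
    simpa using summable_pow_mul_geometric_of_norm_lt_one 1 hx
  have hs2 : Summable (fun n : ℕ => x ^ n) := summable_geometric_of_lt_one h0 h1
  have : (∑' n : ℕ, ((n : ℝ) + 1) * x ^ n)
      = (∑' n : ℕ, (n : ℝ) * x ^ n) + ∑' n : ℕ, x ^ n := by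
    rw [← Summable.tsum_add hs1 hs2]
    congr 1; ext n; ring
  rw [this, tsum_coe_mul_geometric_of_norm_lt_one hx, tsum_geometric_of_lt_one h0 h1]
  have h1x : (1 : ℝ) - x ≠ 0 := by nlinarith
  field_simp
  ring

/-- For TMSV coefficients c_n² = N^n/(N+1)^{n+1} and g = n_e/(1+n_e), the ratio
    c_n²/(g c_{n+1}²) is constant in n, ∑ (n+1) c_n² = N+1, and G has the stated
    closed form. -/
theorem tmsv_G_closed_form (N ne : ℝ) (hN : 0 < N) (hne : 0 < ne) :
    (∀ n : ℕ,
      (N ^ n / (N + 1) ^ (n + 1))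
        / ((ne / (1 + ne)) * (N ^ (n + 1) / (N + 1) ^ (n + 2)))
      = (1 + ne) * (1 + N) / (ne * N)) ∧
    (∑' n : ℕ, ((n : ℝ) + 1) * (N ^ n / (N + 1) ^ (n + 1))) = N + 1 ∧
    (∑' n : ℕ, ((n : ℝ) + 1) *
        meanM (N ^ n / (N + 1) ^ (n + 1))
          ((ne / (1 + ne)) * (N ^ (n + 1) / (N + 1) ^ (n + 2))))
      = 4 * ne * N * (1 + ne)
          / (1 + ne + Real.sqrt (ne * N * (1 + ne) / (1 + N))) ^ 2 := by
  have hN1 : (0:ℝ) < N + 1 := by linarith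
  have hne1 : (0:ℝ) < 1 + ne := by linarith
  have hNne : N + 1 ≠ 0 := ne_of_gt hN1
  have hNn : ∀ n : ℕ, (0:ℝ) < N ^ n := fun n => pow_pos hN n
  have hN1n : ∀ n : ℕ, (0:ℝ) < (N + 1) ^ n := fun n => pow_pos hN1 n
  set x : ℝ := N / (N + 1) with hxdef
  have hx0 : 0 ≤ x := le_of_lt (div_pos hN hN1)
  have hx1 : x < 1 := by rw [hxdef, div_lt_one hN1]; linarith
  have h1x : (1:ℝ) - x = 1 / (N + 1) := by rw [hxdef]; field_simp; ring
  have hsum2 : (∑' n : ℕ, ((n : ℝ) + 1) * (N ^ n / (N + 1) ^ (n + 1))) = N + 1 := by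
    have heq : ∀ n : ℕ, ((n : ℝ) + 1) * (N ^ n / (N + 1) ^ (n + 1))
        = (((n : ℝ) + 1) * x ^ n) * (1 / (N + 1)) := by
      intro n
      rw [hxdef, div_pow, pow_succ]
      field_simp
      try ring
    calc (∑' n : ℕ, ((n : ℝ) + 1) * (N ^ n / (N + 1) ^ (n + 1)))
        = ∑' n : ℕ, (((n : ℝ) + 1) * x ^ n) * (1 / (N + 1)) := by
          exact tsum_congr heq
      _ = (∑' n : ℕ, ((n : ℝ) + 1) * x ^ n) * (1 / (N + 1)) := tsum_mul_right
      _ = (1 - x)⁻¹ ^ 2 * (1 / (N + 1)) := by rw [sum_np1_geom x hx0 hx1]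
      _ = N + 1 := by rw [h1x]; field_simp
  refine ⟨?_, hsum2, ?_⟩
  · intro n
    have h1 : N ^ n ≠ 0 := ne_of_gt (hNn n)
    have h2 : (N + 1) ^ (n+1) ≠ 0 := ne_of_gt (hN1n (n+1))
    have h3 : (N + 1) ^ (n+2) ≠ 0 := ne_of_gt (hN1n (n+2))
    rw [pow_succ N n, pow_succ (N+1) (n+1)]
    field_simp
    ring
  · set K : ℝ := (ne / (1 + ne)) * (N / (N + 1)) with hKdef
    have hK0 : 0 < K := mul_pos (div_pos hne hne1) (div_pos hN hN1)
    have heq : ∀ n : ℕ, ((n : ℝ) + 1) *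
        meanM (N ^ n / (N + 1) ^ (n + 1))
          ((ne / (1 + ne)) * (N ^ (n + 1) / (N + 1) ^ (n + 2)))
        = (((n:ℝ) + 1) * (N ^ n / (N + 1) ^ (n + 1))) * meanM 1 K := by
      intro n
      have ht : (0:ℝ) ≤ N ^ n / (N + 1) ^ (n + 1) :=
        le_of_lt (div_pos (hNn n) (hN1n (n+1)))
      have e1 : N ^ n / (N + 1) ^ (n + 1) = (N ^ n / (N + 1) ^ (n + 1)) * 1 := by ring
      have e2 : (ne / (1 + ne)) * (N ^ (n + 1) / (N + 1) ^ (n + 2))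
          = (N ^ n / (N + 1) ^ (n + 1)) * K := by
        rw [hKdef, pow_succ N n, pow_succ (N+1) (n+1)]
        field_simp
      rw [e2]
      nth_rewrite 1 [e1]
      rw [meanM_homog _ _ _ ht]
      ring
    rw [tsum_congr heq, tsum_mul_right, hsum2]
    have hsq : Real.sqrt (ne * N * (1 + ne) / (1 + N)) = (1 + ne) * Real.sqrt K := by
      have h : ne * N * (1 + ne) / (1 + N) = (1 + ne)^2 * K := by
        rw [hKdef]; field_simp; ring
      rw [h, Real.sqrt_mul (by positivity), Real.sqrt_sq (le_of_lt hne1)]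
    rw [hsq]
    unfold meanM
    rw [Real.sqrt_one]
    have hsK : 0 ≤ Real.sqrt K := Real.sqrt_nonneg K
    have hd1 : (1 + Real.sqrt K) ^ 2 ≠ 0 := by positivity
    rw [show (1 + ne + (1 + ne) * Real.sqrt K) = (1 + ne) * (1 + Real.sqrt K) by ring,
      mul_pow, mul_div_assoc', div_eq_div_iff hd1 (by positivity)]
    rw [hKdef]
    field_simp
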